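/- Let d be an odd integer with d ≥ 3 and let c ∈ ℝ with c ≥ 1. Then the sequence of even iterates q_c^{[2n]}(0) is decreasing (in n) and the sequence of odd iterates q_c^{[2n+1]}(0) is increasing (in n). -/

import Mathlib

/-! The map `q x = -x ^ d + c` is antitone (as `d` is odd), so `q ∘ q` is monotone, and
`q (q 0) = c - c ^ d ≤ 0` because `c ≥ 1`. Hence the orbit of `0` under `q ∘ q` decreases,
and applying the antitone `q` once more turns it into the increasing sequence of odd iterates. -/

namespace Antitone

variable {α : Type*} [Preorder α] {f : α → α} {x : α}

theorem antitone_iterate_two_mul_of_map_map_le (hf : Antitone f) (hx : f (f x) ≤ x) :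
    Antitone fun n => f^[2 * n] x := by
  simp only [Function.iterate_mul]
  exact (hf.comp hf).antitone_iterate_of_map_le hx

theorem monotone_iterate_two_mul_add_one_of_map_map_le (hf : Antitone f) (hx : f (f x) ≤ x) :
    Monotone fun n => f^[2 * n + 1] x := by
  simp only [Function.iterate_succ_apply']
  exact hf.comp (hf.antitone_iterate_two_mul_of_map_map_le hx)

end Antitone

theorem antitone_neg_pow_add {d : ℕ} (hodd : Odd d) (c : ℝ) : Antitone fun x : ℝ => -x ^ d + c :=
  fun _ _ hxy => by
    have := hodd.strictMono_pow.monotone hxy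
    linarith

theorem neg_pow_add_neg_pow_add_zero_nonpos {d : ℕ} (hd : d ≠ 0) {c : ℝ} (hc : 1 ≤ c) :
    -(-(0 : ℝ) ^ d + c) ^ d + c ≤ 0 := by
  have := le_self_pow₀ hc hd
  simp only [ne_eq, hd, not_false_eq_true, zero_pow, neg_zero, zero_add]
  linarith

/-- For odd `d ≥ 3` and real `c ≥ 1`, the even iterates `q_c^[2n](0)` form a
decreasing sequence and the odd iterates `q_c^[2n+1](0)` form an increasing sequence,
where `q_c(x) = -x^d + c`. -/
theorem stmt_17 (d : ℕ) (hd : 3 ≤ d) (hodd : Odd d) (c : ℝ) (hc : 1 ≤ c) :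
    Antitone (fun n : ℕ => (fun x : ℝ => -x ^ d + c)^[2 * n] 0) ∧
    Monotone (fun n : ℕ => (fun x : ℝ => -x ^ d + c)^[2 * n + 1] 0) := by
  have hq := antitone_neg_pow_add hodd c
  have h0 := neg_pow_add_neg_pow_add_zero_nonpos (by omega : d ≠ 0) hc
  exact ⟨hq.antitone_iterate_two_mul_of_map_map_le h0,
    hq.monotone_iterate_two_mul_add_one_of_map_map_le h0⟩
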